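/- Let K be a field, Γ a group, ρ₀ : Γ → GL_n(K) a group homomorphism, and let α, α' : Γ → M_n(K) be two functions such that both ρ_α : γ ↦ (1 + ε·α(γ))·ρ₀(γ) and ρ_{α'} : γ ↦ (1 + ε·α'(γ))·ρ₀(γ) are group homomorphisms Γ → GL_n(K[ε]). Then ρ_α and ρ_{α'} are conjugate by an element of the kernel of the reduction map GL_n(K[ε]) → GL_n(K) if and only if there exists ξ ∈ M_n(K) such that α'(γ) − α(γ) = ξ − ρ₀(γ)·ξ·ρ₀(γ)⁻¹ for all γ ∈ Γ (i.e., if and only if α' − α is a 1-coboundary for the adjoint action γ·m = ρ₀(γ)·m·ρ₀(γ)⁻¹). -/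

import Mathlib

open Matrix DualNumber

/-- The reduction `K[ε] → K` sending `ε` to `0`. -/
noncomputable def redK (K : Type*) [Field K] : DualNumber K →+* K :=
  (TrivSqZeroExt.fstHom K K K).toRingHom

/-- The reduction map `GL_n(K[ε]) → GL_n(K)`. -/
noncomputable def RedGL (K : Type*) [Field K] (n : ℕ) :
    GL (Fin n) (DualNumber K) →* GL (Fin n) K :=
  Units.map (RingHom.mapMatrix (redK K)).toMonoidHom

/-- The canonical inclusion of matrices over `K` into matrices over `K[ε]`. -/
noncomputable def inclM (K : Type*) [Field K] (n : ℕ) :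
    Matrix (Fin n) (Fin n) K →+* Matrix (Fin n) (Fin n) (DualNumber K) :=
  RingHom.mapMatrix (algebraMap K (DualNumber K))

/-!
Every element of the kernel of the reduction is `1 + εξ`, with inverse `1 - εξ`. Since
`ε² = 0`, conjugating `(1 + εa)·ρ₀(γ)` by it gives
`(1 + ε(a + ξ - ρ₀(γ) ξ ρ₀(γ)⁻¹))·ρ₀(γ)`, and the `ε`-part of such a product determines `a`;
so comparing with `(1 + εα'(γ))·ρ₀(γ)` turns the conjugacy into the coboundary equation.
-/

section DualNumberMatrix

variable {R m : Type*} [CommRing R] [Fintype m]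

theorem eps_smul_mul_eps_smul (X Y : Matrix m m (DualNumber R)) :
    ((eps : DualNumber R) • X) * ((eps : DualNumber R) • Y) = 0 := by
  rw [smul_mul_smul_comm, eps_mul_eps, zero_smul]

variable [DecidableEq m]

theorem one_add_eps_smul_mul_one_sub_eps_smul (X : Matrix m m (DualNumber R)) :
    (1 + (eps : DualNumber R) • X) * (1 - (eps : DualNumber R) • X) = 1 := by
  simp only [mul_sub, add_mul, eps_smul_mul_eps_smul, one_mul, mul_one]
  abel

theorem one_sub_eps_smul_mul_one_add_eps_smul (X : Matrix m m (DualNumber R)) :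
    (1 - (eps : DualNumber R) • X) * (1 + (eps : DualNumber R) • X) = 1 := by
  simp only [mul_add, sub_mul, eps_smul_mul_eps_smul, one_mul, mul_one]
  abel

theorem one_add_eps_smul_conj (X A P : Matrix m m (DualNumber R)) :
    (1 + (eps : DualNumber R) • X) * ((1 + (eps : DualNumber R) • A) * P)
        * (1 - (eps : DualNumber R) • X) =
      P + (eps : DualNumber R) • (X * P + A * P - P * X) := by
  simp only [mul_add, add_mul, mul_sub, one_mul, mul_one, smul_mul_assoc,
    mul_smul_comm, smul_smul, eps_mul_eps, zero_smul, smul_sub, smul_add, zero_mul, smul_zero]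
  abel

end DualNumberMatrix

section Deformation

variable {K : Type*} [Field K] {n : ℕ}

theorem inclM_apply (B : Matrix (Fin n) (Fin n) K) (i j : Fin n) :
    inclM K n B i j = TrivSqZeroExt.inl (B i j) := by
  simp [inclM, TrivSqZeroExt.algebraMap_eq_inl]

theorem eps_smul_inclM_injective :
    Function.Injective fun B : Matrix (Fin n) (Fin n) K =>
      (eps : DualNumber K) • inclM K n B := by
  intro B C h
  ext i j
  simpa [inclM_apply] using congrArg TrivSqZeroExt.snd (congrFun (congrFun h i) j)

theorem inclM_map_fst_add_eps_smul (M : Matrix (Fin n) (Fin n) (DualNumber K)) :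
    inclM K n (M.map TrivSqZeroExt.fst) +
      (eps : DualNumber K) • inclM K n (M.map TrivSqZeroExt.snd) = M := by
  ext i j <;> simp [inclM_apply]

theorem mapMatrix_redK_eps_smul (M : Matrix (Fin n) (Fin n) (DualNumber K)) :
    RingHom.mapMatrix (redK K) ((eps : DualNumber K) • M) = 0 := by
  ext i j
  simp [redK]

noncomputable def oneAddEpsGL (ξ : Matrix (Fin n) (Fin n) K) : GL (Fin n) (DualNumber K) where
  val := 1 + (eps : DualNumber K) • inclM K n ξ
  inv := 1 - (eps : DualNumber K) • inclM K n ξ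
  val_inv := one_add_eps_smul_mul_one_sub_eps_smul _
  inv_val := one_sub_eps_smul_mul_one_add_eps_smul _

theorem mem_ker_redGL_iff (u : GL (Fin n) (DualNumber K)) :
    u ∈ (RedGL K n).ker ↔ ∃ ξ, oneAddEpsGL ξ = u := by
  constructor
  · intro hu
    have hfst : (u : Matrix (Fin n) (Fin n) (DualNumber K)).map TrivSqZeroExt.fst = 1 :=
      congrArg Units.val ((MonoidHom.mem_ker).1 hu)
    refine ⟨(u : Matrix (Fin n) (Fin n) (DualNumber K)).map TrivSqZeroExt.snd, Units.ext ?_⟩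
    conv_rhs =>
      rw [← inclM_map_fst_add_eps_smul (u : Matrix (Fin n) (Fin n) (DualNumber K)), hfst, map_one]
    rfl
  · rintro ⟨ξ, rfl⟩
    refine (MonoidHom.mem_ker).2 (Units.ext ?_)
    change RingHom.mapMatrix (redK K) (1 + _) = 1
    rw [map_add, map_one, mapMatrix_redK_eps_smul, add_zero]

theorem one_add_eps_smul_mul_inclM_injective (g : GL (Fin n) K) :
    Function.Injective fun a : Matrix (Fin n) (Fin n) K =>
      (1 + (eps : DualNumber K) • inclM K n a) * inclM K n g := by
  intro a b h
  have hg : IsUnit (inclM K n g) := g.isUnit.map (inclM K n)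
  exact eps_smul_inclM_injective (add_left_cancel (hg.mul_left_injective h))

theorem oneAddEpsGL_conj (ξ a : Matrix (Fin n) (Fin n) K) (g : GL (Fin n) K) :
    ((oneAddEpsGL ξ : Matrix (Fin n) (Fin n) (DualNumber K)) *
        ((1 + (eps : DualNumber K) • inclM K n a) * inclM K n g) *
        ((oneAddEpsGL ξ)⁻¹ : GL (Fin n) (DualNumber K))) =
      (1 + (eps : DualNumber K) • inclM K n (a + (ξ - (g : Matrix (Fin n) (Fin n) K) * ξ *
        (g : Matrix (Fin n) (Fin n) K)⁻¹))) * inclM K n g := by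
  have hg : (g : Matrix (Fin n) (Fin n) K)⁻¹ * g = 1 := by
    rw [← coe_units_inv, ← Units.val_mul, inv_mul_cancel, Units.val_one]
  have hcoeff : (a + (ξ - (g : Matrix (Fin n) (Fin n) K) * ξ *
      (g : Matrix (Fin n) (Fin n) K)⁻¹)) * g = ξ * g + a * g - g * ξ := by
    simp only [add_mul, sub_mul, Matrix.mul_assoc, hg, Matrix.mul_one]
    abel
  change (1 + _) * _ * (1 - _) = _
  rw [one_add_eps_smul_conj, add_mul, one_mul, smul_mul_assoc]
  simp only [← map_mul, ← map_add, ← map_sub, hcoeff]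

end Deformation

/-- two first-order deformations `ρ_α`, `ρ_{α'}` of `ρ₀` are conjugate by an
element of the kernel of the reduction `GL_n(K[ε]) → GL_n(K)` if and only if `α' − α` is a
1-coboundary for the adjoint action. -/
theorem stmt_2 (K : Type*) [Field K] (n : ℕ) (Γ : Type*) [Group Γ]
    (ρ₀ : Γ →* GL (Fin n) K) (α α' : Γ → Matrix (Fin n) (Fin n) K)
    (F F' : Γ →* GL (Fin n) (DualNumber K))
    (hF : ∀ γ : Γ, (F γ : Matrix (Fin n) (Fin n) (DualNumber K)) =
      (1 + (DualNumber.eps : DualNumber K) • inclM K n (α γ)) *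
        inclM K n (ρ₀ γ : Matrix (Fin n) (Fin n) K))
    (hF' : ∀ γ : Γ, (F' γ : Matrix (Fin n) (Fin n) (DualNumber K)) =
      (1 + (DualNumber.eps : DualNumber K) • inclM K n (α' γ)) *
        inclM K n (ρ₀ γ : Matrix (Fin n) (Fin n) K)) :
    (∃ u : GL (Fin n) (DualNumber K), u ∈ (RedGL K n).ker ∧
        ∀ γ : Γ, F' γ = u * F γ * u⁻¹) ↔
      (∃ ξ : Matrix (Fin n) (Fin n) K, ∀ γ : Γ,
        α' γ - α γ = ξ - (ρ₀ γ : Matrix (Fin n) (Fin n) K) * ξ *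
          ((ρ₀ γ)⁻¹ : Matrix (Fin n) (Fin n) K)) := by
  constructor
  · rintro ⟨u, hu, hconj⟩
    obtain ⟨ξ, rfl⟩ := (mem_ker_redGL_iff u).1 hu
    refine ⟨ξ, fun γ => sub_eq_of_eq_add' ?_⟩
    apply one_add_eps_smul_mul_inclM_injective (ρ₀ γ)
    have h := congrArg Units.val (hconj γ)
    rwa [Units.val_mul, Units.val_mul, hF', hF, oneAddEpsGL_conj] at h
  · rintro ⟨ξ, hξ⟩
    refine ⟨oneAddEpsGL ξ, (mem_ker_redGL_iff _).2 ⟨ξ, rfl⟩, fun γ => Units.ext ?_⟩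
    rw [Units.val_mul, Units.val_mul, hF', hF, oneAddEpsGL_conj, ← hξ γ, add_sub_cancel]
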